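/- arXiv:2109.06005 — 5 statements merged into one kernel-verified Lean document; each statement's English description precedes it below -/
import Mathlib

section
/- (Conservation of total momentum.) Let d ≥ 1 and let the mixture parameters be as defined, with arbitrary δ ∈ ℝ and u21 = u2 − (m1/m2) ε (1−δ)(u2 − u1). Suppose f1, f2 : ℝ^d → ℝ are nonnegative, with f_k and v·f_k integrable, ∫ f_k dv = n_k and ∫ v f_k dv = n_k u_k for k = 1,2. Let M12 = M[n1, u12, T12, m1] and M21 = M[n2, u21, T21, m2] for any T12, T21 > 0. Then the total momentum exchange vanishes: ν12 n2 ∫_{ℝ^d} m1 v (M12(v) − f1(v)) dv + ν21 n1 ∫_{ℝ^d} m2 v (M21(v) − f2(v)) dv = 0. -/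
open MeasureTheory Real

/-- The Maxwell distribution `M[n,u,T,m]` on `ℝ^d`:
`M(v) = n / (2π T/m)^(d/2) · exp(−|v−u|² / (2T/m))`. -/
noncomputable def maxwellian (d : ℕ) (n : ℝ) (u : EuclideanSpace ℝ (Fin d)) (T m : ℝ)
    (v : EuclideanSpace ℝ (Fin d)) : ℝ :=
  n / (2 * π * T / m) ^ ((d : ℝ) / 2) * Real.exp (-‖v - u‖ ^ 2 / (2 * T / m))

/-!
A Maxwellian `M[n,u,T,m]` is `n` times a normalized Gaussian centred at `u`, so by translation
invariance and odd symmetry its momentum `∫ v M(v) dv` is `n u`. Hence species 1 exchanges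
`m1 n1 (u12 − u1) = m1 n1 (1 − δ)(u2 − u1)` and species 2 exchanges
`m2 n2 (u21 − u2) = −ε m1 n2 (1 − δ)(u2 − u1)`; weighted by `ν12 n2 = ε ν21 n2` and `ν21 n1`,
the two contributions cancel.
-/

open Module

lemma integral_eq_zero_of_odd {G E : Type*} [MeasurableSpace G] [AddGroup G] [MeasurableNeg G]
    [NormedAddCommGroup E] [NormedSpace ℝ E] (μ : Measure G) [μ.IsNegInvariant] {f : G → E}
    (hf : ∀ x, f (-x) = -f x) : ∫ x, f x ∂μ = 0 := by
  have h := integral_neg_eq_self f μ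
  simp only [hf, integral_neg] at h
  linear_combination (norm := module) (-(1 / 2 : ℝ)) • h

lemma mul_rexp_neg_mul_sq_le {b : ℝ} (hb : 0 < b) (x : ℝ) :
    x * rexp (-b * x ^ 2) ≤ (√b)⁻¹ * rexp (-(b / 2) * x ^ 2) := by
  have hsb : 0 < √b := sqrt_pos.2 hb
  have hx : √b * x ≤ rexp (b / 2 * x ^ 2) := by
    nlinarith [sq_nonneg (√b * x - 1), sq_sqrt hb.le, add_one_le_exp (b / 2 * x ^ 2)]
  calc x * rexp (-b * x ^ 2) = (√b)⁻¹ * (√b * x) * rexp (-b * x ^ 2) := by field_simp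
    _ ≤ (√b)⁻¹ * rexp (b / 2 * x ^ 2) * rexp (-b * x ^ 2) := by gcongr
    _ = (√b)⁻¹ * rexp (-(b / 2) * x ^ 2) := by rw [mul_assoc, ← exp_add]; ring_nf

section Gaussian

variable {V : Type*} [NormedAddCommGroup V] [InnerProductSpace ℝ V] [FiniteDimensional ℝ V]
  [MeasurableSpace V] [BorelSpace V] {b : ℝ}

lemma integrable_rexp_neg_mul_sq_norm (hb : 0 < b) :
    Integrable fun v : V => rexp (-b * ‖v‖ ^ 2) := by
  refine Integrable.of_integral_ne_zero ?_
  rw [GaussianFourier.integral_rexp_neg_mul_sq_norm hb]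
  positivity

lemma integrable_rexp_neg_mul_sq_norm_smul (hb : 0 < b) :
    Integrable fun v : V => rexp (-b * ‖v‖ ^ 2) • v := by
  refine ((integrable_rexp_neg_mul_sq_norm (half_pos hb)).const_mul (√b)⁻¹).mono'
    (by fun_prop) (ae_of_all _ fun v => ?_)
  rw [norm_smul, norm_of_nonneg (exp_pos _).le, mul_comm]
  exact mul_rexp_neg_mul_sq_le hb ‖v‖

lemma integral_rexp_neg_mul_sq_norm_smul (b : ℝ) :
    ∫ v : V, rexp (-b * ‖v‖ ^ 2) • v = 0 :=
  integral_eq_zero_of_odd volume fun v => by simp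

lemma integrable_rexp_neg_mul_sq_norm_sub_smul (hb : 0 < b) (u : V) :
    Integrable fun v : V => rexp (-b * ‖v - u‖ ^ 2) • v := by
  have h := ((integrable_rexp_neg_mul_sq_norm_smul hb).add
    ((integrable_rexp_neg_mul_sq_norm hb).smul_const u)).comp_sub_right u
  simpa only [Pi.add_apply, ← smul_add, sub_add_cancel] using h

lemma integral_rexp_neg_mul_sq_norm_sub_smul (hb : 0 < b) (u : V) :
    ∫ v : V, rexp (-b * ‖v - u‖ ^ 2) • v = (π / b) ^ (finrank ℝ V / 2 : ℝ) • u := by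
  have hshift := integral_sub_right_eq_self (μ := volume)
    (fun w : V => rexp (-b * ‖w‖ ^ 2) • (w + u)) u
  simp only [sub_add_cancel] at hshift
  rw [hshift]
  simp only [smul_add]
  rw [integral_add (integrable_rexp_neg_mul_sq_norm_smul hb)
      ((integrable_rexp_neg_mul_sq_norm hb).smul_const u), integral_smul_const,
    integral_rexp_neg_mul_sq_norm_smul, GaussianFourier.integral_rexp_neg_mul_sq_norm hb,
    zero_add]

end Gaussian

section Maxwellian

variable {d : ℕ} {n T m : ℝ} {u : EuclideanSpace ℝ (Fin d)}

lemma maxwellian_eq (v : EuclideanSpace ℝ (Fin d)) :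
    maxwellian d n u T m v
      = n / (π / (2 * T / m)⁻¹) ^ ((d : ℝ) / 2) * rexp (-(2 * T / m)⁻¹ * ‖v - u‖ ^ 2) := by
  rw [maxwellian, div_inv_eq_mul, neg_mul, ← div_eq_inv_mul, neg_div]
  ring_nf

lemma integrable_maxwellian_smul (hTm : 0 < T / m) :
    Integrable fun v => maxwellian d n u T m v • v := by
  have hb : 0 < (2 * T / m)⁻¹ := by rw [mul_div_assoc]; positivity
  simp_rw [maxwellian_eq, mul_smul]
  exact (integrable_rexp_neg_mul_sq_norm_sub_smul hb u).smul (𝕜 := ℝ) _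

lemma integral_maxwellian_smul (hTm : 0 < T / m) :
    ∫ v, maxwellian d n u T m v • v = n • u := by
  have hb : 0 < (2 * T / m)⁻¹ := by rw [mul_div_assoc]; positivity
  have hc : 0 < (π / (2 * T / m)⁻¹) ^ ((d : ℝ) / 2) := by positivity
  simp_rw [maxwellian_eq, mul_smul]
  rw [integral_smul, integral_rexp_neg_mul_sq_norm_sub_smul hb, finrank_euclideanSpace_fin,
    smul_smul, div_mul_cancel₀ _ hc.ne']

lemma integral_mul_maxwellian_sub_smul (hTm : 0 < T / m) {f : EuclideanSpace ℝ (Fin d) → ℝ}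
    (hf : Integrable fun v => f v • v) :
    ∫ v, (m * (maxwellian d n u T m v - f v)) • v = m • (n • u - ∫ v, f v • v) := by
  simp_rw [mul_smul, sub_smul]
  rw [integral_smul, integral_sub (integrable_maxwellian_smul hTm) hf,
    integral_maxwellian_smul hTm]

end Maxwellian

theorem bgk_mixture_total_momentum_conservation_general
    (d : ℕ)
    (m1 m2 : ℝ) (hm1 : 0 < m1) (hm2 : 0 < m2)
    (n1 n2 : ℝ)
    (u1 u2 : EuclideanSpace ℝ (Fin d))
    (ε : ℝ)
    (ν21 : ℝ) (ν12 : ℝ) (hν12 : ν12 = ε * ν21)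
    (δ : ℝ)
    (u12 : EuclideanSpace ℝ (Fin d)) (hu12 : u12 = δ • u1 + (1 - δ) • u2)
    (u21 : EuclideanSpace ℝ (Fin d))
    (hu21 : u21 = u2 - ((m1 / m2) * ε * (1 - δ)) • (u2 - u1))
    (T12 T21 : ℝ) (hT12 : 0 < T12) (hT21 : 0 < T21)
    (f1 f2 : EuclideanSpace ℝ (Fin d) → ℝ)
    (hf1vint : Integrable (fun v => f1 v • v)) (hf2vint : Integrable (fun v => f2 v • v))
    (hf1u : (∫ v, f1 v • v) = n1 • u1) (hf2u : (∫ v, f2 v • v) = n2 • u2) :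
    (ν12 * n2) • (∫ v, (m1 * (maxwellian d n1 u12 T12 m1 v - f1 v)) • v)
      + (ν21 * n1) • (∫ v, (m2 * (maxwellian d n2 u21 T21 m2 v - f2 v)) • v) = 0 := by
  rw [integral_mul_maxwellian_sub_smul (div_pos hT12 hm1) hf1vint,
    integral_mul_maxwellian_sub_smul (div_pos hT21 hm2) hf2vint, hf1u, hf2u, hu12, hu21, hν12]
  match_scalars <;> field_simp <;> ring

/-- Conservation of total momentum for the two-species BGK model: with
`u12 = δ u1 + (1−δ) u2` and `u21 = u2 − (m1/m2) ε (1−δ)(u2 − u1)`, the total momentum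
exchange `ν12 n2 ∫ m1 v (M12 − f1) dv + ν21 n1 ∫ m2 v (M21 − f2) dv` vanishes. -/
theorem bgk_mixture_total_momentum_conservation
    (d : ℕ) (hd : 1 ≤ d)
    (m1 m2 : ℝ) (hm1 : 0 < m1) (hm2 : 0 < m2)
    (n1 n2 : ℝ) (hn1 : 0 < n1) (hn2 : 0 < n2)
    (u1 u2 : EuclideanSpace ℝ (Fin d))
    (ε : ℝ) (hε0 : 0 < ε) (hε1 : ε ≤ 1)
    (ν21 : ℝ) (hν21 : 0 < ν21) (ν12 : ℝ) (hν12 : ν12 = ε * ν21)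
    (δ : ℝ)
    (u12 : EuclideanSpace ℝ (Fin d)) (hu12 : u12 = δ • u1 + (1 - δ) • u2)
    (u21 : EuclideanSpace ℝ (Fin d))
    (hu21 : u21 = u2 - ((m1 / m2) * ε * (1 - δ)) • (u2 - u1))
    (T12 T21 : ℝ) (hT12 : 0 < T12) (hT21 : 0 < T21)
    (f1 f2 : EuclideanSpace ℝ (Fin d) → ℝ)
    (hf1pos : ∀ v, 0 ≤ f1 v) (hf2pos : ∀ v, 0 ≤ f2 v)
    (hf1int : Integrable f1) (hf2int : Integrable f2)
    (hf1vint : Integrable (fun v => f1 v • v)) (hf2vint : Integrable (fun v => f2 v • v))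
    (hf1n : (∫ v, f1 v) = n1) (hf2n : (∫ v, f2 v) = n2)
    (hf1u : (∫ v, f1 v • v) = n1 • u1) (hf2u : (∫ v, f2 v • v) = n2 • u2) :
    (ν12 * n2) • (∫ v, (m1 * (maxwellian d n1 u12 T12 m1 v - f1 v)) • v)
      + (ν21 * n1) • (∫ v, (m2 * (maxwellian d n2 u21 T21 m2 v - f2 v)) • v) = 0 :=
  bgk_mixture_total_momentum_conservation_general d m1 m2 hm1 hm2 n1 n2 u1 u2 ε ν21 ν12 hν12 δ u12
    hu12 u21 hu21 T12 T21 hT12 hT21 f1 f2 hf1vint hf2vint hf1u hf2u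
end

section
/- (Conservation of total energy.) Let d ≥ 1 and let the mixture parameters u12, u21, T12, T21 be as defined, with arbitrary δ, α, γ ∈ ℝ such that T12 > 0 and T21 > 0. Suppose f1, f2 : ℝ^d → ℝ are nonnegative with (1+|v|²) f_k integrable, ∫ f_k dv = n_k, ∫ v f_k dv = n_k u_k, and ∫ m_k |v−u_k|² f_k dv = d n_k T_k for k = 1,2. Let M12 = M[n1, u12, T12, m1] and M21 = M[n2, u21, T21, m2]. Then the total energy exchange vanishes: ν12 n2 ∫_{ℝ^d} m1 |v|² (M12(v) − f1(v)) dv + ν21 n1 ∫_{ℝ^d} m2 |v|² (M21(v) − f2(v)) dv = 0. -/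
open MeasureTheory Real

/-!
Both `f_k` and the Maxwellian `M[n_k, u, T, m_k]` carry density `n_k`, so by the parallel axis
formula `∫ |v|² g = ∫ |v - u|² g + n |u|²` each has kinetic energy `∫ m |v|² g = d n T + m n |u|²`
with its own `u` and `T`. For the Maxwellian this reduces, after centring, to the radial Gaussian
integrals `∫ |x|² e^{-b|x|²} = d / (2b) · ∫ e^{-b|x|²}` (polar coordinates and
`Γ(s + 1) = s Γ(s)`) and to the vanishing of its first moment by symmetry.
Writing `u12`, `u21` as affine combinations of `u1`, `u2`, the energy exchange becomes
`ν21 n1 n2` times a polynomial in `T1`, `T2`, `|u1|²`, `|u2|²`, `|u1 - u2|²` that vanishes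
identically for the given `T12`, `T21`.
-/

open Set in
theorem integral_Ioi_rpow_add_two_mul_exp_neg_mul_sq {q b : ℝ} (hq : -1 < q) (hb : 0 < b) :
    ∫ y in Ioi (0 : ℝ), y ^ (q + 2) * exp (-b * y ^ 2)
      = (q + 1) / (2 * b) * ∫ y in Ioi (0 : ℝ), y ^ q * exp (-b * y ^ 2) := by
  simp_rw [← rpow_two]
  rw [integral_rpow_mul_exp_neg_mul_rpow two_pos (by linarith) hb,
    integral_rpow_mul_exp_neg_mul_rpow two_pos hq hb,
    show (q + 2 + 1) / 2 = (q + 1) / 2 + 1 by ring, Gamma_add_one (by linarith),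
    show -(q + 2 + 1) / 2 = -(q + 1) / 2 + -1 by ring, rpow_add hb, rpow_neg_one]
  field_simp

section RadialGaussian

open Module Set

variable {E : Type*} [NormedAddCommGroup E] [NormedSpace ℝ E] [FiniteDimensional ℝ E]
  [MeasurableSpace E] [BorelSpace E] [Nontrivial E] (μ : Measure E) [μ.IsAddHaarMeasure]

theorem integrable_norm_pow_mul_exp_neg_mul_sq (k : ℕ) {b : ℝ} (hb : 0 < b) :
    Integrable (fun x : E => ‖x‖ ^ k * exp (-b * ‖x‖ ^ 2)) μ := by
  rw [integrable_fun_norm_addHaar μ (f := fun y => y ^ k * exp (-b * y ^ 2))]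
  refine (integrableOn_rpow_mul_exp_neg_mul_sq hb (s := ((finrank ℝ E - 1 + k : ℕ) : ℝ))
    (neg_one_lt_zero.trans_le (Nat.cast_nonneg _))).congr_fun (fun y _ => ?_) measurableSet_Ioi
  simp only [rpow_natCast, pow_add, smul_eq_mul, mul_assoc]

theorem integral_norm_sq_mul_exp_neg_mul_sq {b : ℝ} (hb : 0 < b) :
    ∫ x : E, ‖x‖ ^ 2 * exp (-b * ‖x‖ ^ 2) ∂μ
      = finrank ℝ E / (2 * b) * ∫ x : E, exp (-b * ‖x‖ ^ 2) ∂μ := by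
  have hdim : 1 ≤ finrank ℝ E := finrank_pos
  set q : ℝ := ((finrank ℝ E - 1 : ℕ) : ℝ)
  have hq : q + 1 = finrank ℝ E := by simp [q, Nat.cast_sub hdim]
  have h_sq : ∫ y in Ioi (0 : ℝ), y ^ (finrank ℝ E - 1) • (y ^ 2 * exp (-b * y ^ 2))
      = ∫ y in Ioi (0 : ℝ), y ^ (q + 2) * exp (-b * y ^ 2) :=
    setIntegral_congr_fun measurableSet_Ioi fun y hy => by
      rw [rpow_add hy, rpow_natCast, rpow_two, smul_eq_mul, mul_assoc]
  have h_one : ∫ y in Ioi (0 : ℝ), y ^ (finrank ℝ E - 1) • exp (-b * y ^ 2)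
      = ∫ y in Ioi (0 : ℝ), y ^ q * exp (-b * y ^ 2) :=
    setIntegral_congr_fun measurableSet_Ioi fun y _ => by rw [rpow_natCast, smul_eq_mul]
  rw [integral_fun_norm_addHaar μ (fun y => y ^ 2 * exp (-b * y ^ 2)),
    integral_fun_norm_addHaar μ (fun y => exp (-b * y ^ 2)), h_sq, h_one,
    integral_Ioi_rpow_add_two_mul_exp_neg_mul_sq
      (neg_one_lt_zero.trans_le (Nat.cast_nonneg _)) hb, hq]
  simp only [nsmul_eq_mul, smul_eq_mul]
  ring

end RadialGaussian

section InnerProductAlgebra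

open RealInnerProductSpace

variable {V : Type*} [NormedAddCommGroup V] [InnerProductSpace ℝ V]

theorem norm_sub_sq_mul_eq (u v : V) (c : ℝ) :
    ‖v - u‖ ^ 2 * c = ‖v‖ ^ 2 * c - 2 * ⟪u, c • v⟫ + ‖u‖ ^ 2 * c := by
  rw [norm_sub_sq_real, real_inner_smul_right, real_inner_comm]
  ring

theorem norm_smul_add_one_sub_smul_sq (a : ℝ) (x y : V) :
    ‖a • x + (1 - a) • y‖ ^ 2 = a * ‖x‖ ^ 2 + (1 - a) * ‖y‖ ^ 2 - a * (1 - a) * ‖x - y‖ ^ 2 := by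
  rw [norm_add_sq_real, norm_sub_sq_real, norm_smul, norm_smul, mul_pow, mul_pow,
    real_inner_smul_left, real_inner_smul_right, norm_eq_abs, norm_eq_abs, sq_abs, sq_abs]
  ring

end InnerProductAlgebra

section Moments

variable {V : Type*} [NormedAddCommGroup V] [MeasurableSpace V] [BorelSpace V]
  {μ : Measure V} {f : V → ℝ}

namespace MeasureTheory.Integrable

variable (hf : Integrable (fun v => (1 + ‖v‖ ^ 2) * f v) μ)
include hf

theorem aestronglyMeasurable_of_one_add_norm_sq_mul : AEStronglyMeasurable f μ := by
  have hinv : Continuous fun v : V => (1 + ‖v‖ ^ 2)⁻¹ :=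
    (continuous_const.add (continuous_norm.pow 2)).inv₀
      fun v => (by positivity : (0 : ℝ) < 1 + ‖v‖ ^ 2).ne'
  refine (hf.1.mul hinv.aestronglyMeasurable).congr (.of_forall fun v => ?_)
  have : (1 : ℝ) + ‖v‖ ^ 2 ≠ 0 := by positivity
  simp only [Pi.mul_apply]
  field_simp

theorem of_one_add_norm_sq_mul : Integrable f μ :=
  hf.mono hf.aestronglyMeasurable_of_one_add_norm_sq_mul <| .of_forall fun v => by
    rw [norm_mul, Real.norm_of_nonneg (by positivity : (0 : ℝ) ≤ 1 + ‖v‖ ^ 2)]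
    exact le_mul_of_one_le_left (norm_nonneg _) (by nlinarith [sq_nonneg ‖v‖])

theorem norm_sq_mul_of_one_add_norm_sq_mul : Integrable (fun v => ‖v‖ ^ 2 * f v) μ :=
  (hf.sub hf.of_one_add_norm_sq_mul).congr (.of_forall fun v => by simp only [Pi.sub_apply]; ring)

theorem smul_self_of_one_add_norm_sq_mul [NormedSpace ℝ V] [SecondCountableTopology V] :
    Integrable (fun v => f v • v) μ :=
  hf.mono (hf.aestronglyMeasurable_of_one_add_norm_sq_mul.smul aestronglyMeasurable_id) <|
    .of_forall fun v => by
      rw [norm_smul, norm_mul, Real.norm_of_nonneg (by positivity : (0 : ℝ) ≤ 1 + ‖v‖ ^ 2),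
        mul_comm]
      gcongr
      nlinarith [norm_nonneg v, sq_nonneg (‖v‖ - 1)]

end MeasureTheory.Integrable

open RealInnerProductSpace

variable [InnerProductSpace ℝ V] [SecondCountableTopology V]

theorem MeasureTheory.Integrable.norm_sub_sq_mul_of_one_add_norm_sq_mul
    (hf : Integrable (fun v => (1 + ‖v‖ ^ 2) * f v) μ) (u : V) :
    Integrable (fun v => ‖v - u‖ ^ 2 * f v) μ := by
  simp_rw [norm_sub_sq_mul_eq u]
  exact (hf.norm_sq_mul_of_one_add_norm_sq_mul.sub
    ((hf.smul_self_of_one_add_norm_sq_mul.const_inner (𝕜 := ℝ) u).const_mul 2)).add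
    (hf.of_one_add_norm_sq_mul.const_mul _)

variable [CompleteSpace V]

theorem integral_norm_sub_sq_mul (hf : Integrable (fun v => (1 + ‖v‖ ^ 2) * f v) μ) (u : V) :
    ∫ v, ‖v - u‖ ^ 2 * f v ∂μ
      = ∫ v, ‖v‖ ^ 2 * f v ∂μ - 2 * ⟪u, ∫ v, f v • v ∂μ⟫ + ‖u‖ ^ 2 * ∫ v, f v ∂μ := by
  have h_sq := hf.norm_sq_mul_of_one_add_norm_sq_mul
  have h_first := hf.smul_self_of_one_add_norm_sq_mul
  have h_inner := (h_first.const_inner (𝕜 := ℝ) u).const_mul 2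
  have h_diff : Integrable (fun v => ‖v‖ ^ 2 * f v - 2 * ⟪u, f v • v⟫) μ := h_sq.sub h_inner
  simp_rw [norm_sub_sq_mul_eq u]
  rw [integral_add h_diff (hf.of_one_add_norm_sq_mul.const_mul _), integral_sub h_sq h_inner,
    integral_const_mul, integral_const_mul, integral_inner h_first]

theorem integral_norm_sq_mul_eq_of_moments (hf : Integrable (fun v => (1 + ‖v‖ ^ 2) * f v) μ)
    {n : ℝ} {u : V} (hn : ∫ v, f v ∂μ = n) (hu : ∫ v, f v • v ∂μ = n • u) :
    ∫ v, ‖v‖ ^ 2 * f v ∂μ = ∫ v, ‖v - u‖ ^ 2 * f v ∂μ + n * ‖u‖ ^ 2 := by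
  rw [integral_norm_sub_sq_mul hf, hn, hu, real_inner_smul_right, real_inner_self_eq_norm_sq]
  ring

end Moments

section Maxwellian

variable {d : ℕ} {n T m : ℝ}

theorem maxwellian_eq_mul_exp (u v : EuclideanSpace ℝ (Fin d)) :
    maxwellian d n u T m v
      = n / (2 * π * T / m) ^ ((d : ℝ) / 2) * exp (-(m / (2 * T)) * ‖v - u‖ ^ 2) := by
  rw [maxwellian, div_div_eq_mul_div]
  ring_nf

theorem maxwellian_eq_maxwellian_zero_sub (u v : EuclideanSpace ℝ (Fin d)) :
    maxwellian d n u T m v = maxwellian d n 0 T m (v - u) := by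
  simp only [maxwellian, sub_zero]

theorem integral_smul_self_maxwellian_zero :
    ∫ v, maxwellian d n 0 T m v • v = 0 := by
  have h_odd := integral_neg_eq_self (fun v => maxwellian d n 0 T m v • v) volume
  have h_even (v : EuclideanSpace ℝ (Fin d)) :
      maxwellian d n 0 T m (-v) = maxwellian d n 0 T m v := by
    simp only [maxwellian, sub_zero, norm_neg]
  simp only [h_even, smul_neg, integral_neg] at h_odd
  linear_combination (norm := module) (-(1 / 2 : ℝ)) • h_odd

theorem norm_sq_mul_maxwellian_eq_comp_sub (u : EuclideanSpace ℝ (Fin d)) :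
    (fun v => ‖v‖ ^ 2 * maxwellian d n u T m v)
      = fun v => ‖(v - u) - -u‖ ^ 2 * maxwellian d n 0 T m (v - u) := by
  ext v
  rw [maxwellian_eq_maxwellian_zero_sub u, sub_neg_eq_add, sub_add_cancel]

variable (hT : 0 < T) (hm : 0 < m)
include hT hm

theorem integral_maxwellian_zero : ∫ v, maxwellian d n 0 T m v = n := by
  simp_rw [maxwellian_eq_mul_exp, sub_zero]
  rw [integral_const_mul, GaussianFourier.integral_rexp_neg_mul_sq_norm (by positivity),
    finrank_euclideanSpace_fin, show π / (m / (2 * T)) = 2 * π * T / m by field_simp,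
    div_mul_cancel₀]
  positivity

theorem integral_norm_sq_mul_maxwellian_zero [NeZero d] :
    ∫ v, ‖v‖ ^ 2 * maxwellian d n 0 T m v = d * T / m * n := by
  have hb : 0 < m / (2 * T) := by positivity
  set C := n / (2 * π * T / m) ^ ((d : ℝ) / 2)
  have h_mass : C * ∫ v : EuclideanSpace ℝ (Fin d), exp (-(m / (2 * T)) * ‖v‖ ^ 2) = n := by
    rw [← integral_maxwellian_zero hT hm (d := d) (n := n), ← integral_const_mul]
    simp_rw [maxwellian_eq_mul_exp, sub_zero, C]
  calc ∫ v, ‖v‖ ^ 2 * maxwellian d n 0 T m v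
      = C * ∫ v : EuclideanSpace ℝ (Fin d), ‖v‖ ^ 2 * exp (-(m / (2 * T)) * ‖v‖ ^ 2) := by
        simp_rw [maxwellian_eq_mul_exp, sub_zero, mul_left_comm (‖_‖ ^ 2)]
        exact integral_const_mul _ _
    _ = d / (2 * (m / (2 * T))) * n := by
        rw [integral_norm_sq_mul_exp_neg_mul_sq _ hb, finrank_euclideanSpace_fin, ← h_mass]
        ring
    _ = d * T / m * n := by field_simp

theorem integrable_one_add_norm_sq_mul_maxwellian_zero [NeZero d] :
    Integrable (fun v => (1 + ‖v‖ ^ 2) * maxwellian d n 0 T m v) := by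
  have hb : 0 < m / (2 * T) := by positivity
  have h_exp : Integrable fun v : EuclideanSpace ℝ (Fin d) => exp (-(m / (2 * T)) * ‖v‖ ^ 2) := by
    simpa using integrable_norm_pow_mul_exp_neg_mul_sq volume 0 hb
  simp_rw [maxwellian_eq_mul_exp, sub_zero, add_mul, one_mul, mul_left_comm (‖_‖ ^ 2)]
  exact (h_exp.const_mul _).add ((integrable_norm_pow_mul_exp_neg_mul_sq volume 2 hb).const_mul _)

theorem integrable_norm_sq_mul_maxwellian [NeZero d] (u : EuclideanSpace ℝ (Fin d)) :
    Integrable (fun v => ‖v‖ ^ 2 * maxwellian d n u T m v) := by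
  rw [norm_sq_mul_maxwellian_eq_comp_sub]
  exact ((integrable_one_add_norm_sq_mul_maxwellian_zero hT hm)
    |>.norm_sub_sq_mul_of_one_add_norm_sq_mul (-u)).comp_sub_right u

theorem integral_norm_sq_mul_maxwellian [NeZero d] (u : EuclideanSpace ℝ (Fin d)) :
    ∫ v, ‖v‖ ^ 2 * maxwellian d n u T m v = d * T / m * n + n * ‖u‖ ^ 2 := by
  rw [norm_sq_mul_maxwellian_eq_comp_sub,
    integral_sub_right_eq_self (fun w => ‖w - -u‖ ^ 2 * maxwellian d n 0 T m w) u,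
    integral_norm_sub_sq_mul (integrable_one_add_norm_sq_mul_maxwellian_zero hT hm),
    integral_smul_self_maxwellian_zero, integral_norm_sq_mul_maxwellian_zero hT hm,
    integral_maxwellian_zero hT hm]
  simp only [inner_zero_right, norm_neg]
  ring

theorem integral_mul_norm_sq_mul_maxwellian_sub [NeZero d] {f : EuclideanSpace ℝ (Fin d) → ℝ}
    {u u₀ : EuclideanSpace ℝ (Fin d)} {T₀ : ℝ} (hf : Integrable (fun v => (1 + ‖v‖ ^ 2) * f v))
    (hfn : ∫ v, f v = n) (hfu : ∫ v, f v • v = n • u₀)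
    (hfT : ∫ v, m * ‖v - u₀‖ ^ 2 * f v = d * n * T₀) :
    ∫ v, m * ‖v‖ ^ 2 * (maxwellian d n u T m v - f v)
      = d * n * (T - T₀) + m * n * (‖u‖ ^ 2 - ‖u₀‖ ^ 2) := by
  simp_rw [mul_assoc m] at hfT
  rw [integral_const_mul] at hfT
  simp_rw [mul_assoc m, mul_sub]
  rw [integral_sub ((integrable_norm_sq_mul_maxwellian hT hm u).const_mul m)
      (hf.norm_sq_mul_of_one_add_norm_sq_mul.const_mul m),
    integral_const_mul, integral_const_mul, integral_norm_sq_mul_maxwellian hT hm,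
    integral_norm_sq_mul_eq_of_moments hf hfn hfu]
  field_simp
  linear_combination -hfT

end Maxwellian

theorem bgk_mixture_total_energy_conservation_general
    (d : ℕ) (hd : 1 ≤ d)
    (m1 m2 : ℝ) (hm1 : 0 < m1) (hm2 : 0 < m2)
    (n1 n2 : ℝ)
    (u1 u2 : EuclideanSpace ℝ (Fin d)) (T1 T2 : ℝ)
    (ε : ℝ)
    (ν21 : ℝ) (ν12 : ℝ) (hν12 : ν12 = ε * ν21)
    (δ α γ : ℝ)
    (u12 : EuclideanSpace ℝ (Fin d)) (hu12 : u12 = δ • u1 + (1 - δ) • u2)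
    (u21 : EuclideanSpace ℝ (Fin d))
    (hu21 : u21 = u2 - ((m1 / m2) * ε * (1 - δ)) • (u2 - u1))
    (T12 : ℝ) (hT12 : T12 = α * T1 + (1 - α) * T2 + γ * ‖u1 - u2‖ ^ 2)
    (T21 : ℝ)
    (hT21 : T21 = ((1 / d) * ε * m1 * (1 - δ) * ((m1 / m2) * ε * (δ - 1) + δ + 1) - ε * γ)
        * ‖u1 - u2‖ ^ 2 + ε * (1 - α) * T1 + (1 - ε * (1 - α)) * T2)
    (hT12pos : 0 < T12) (hT21pos : 0 < T21)
    (f1 f2 : EuclideanSpace ℝ (Fin d) → ℝ)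
    (hf1int : Integrable (fun v => (1 + ‖v‖ ^ 2) * f1 v))
    (hf2int : Integrable (fun v => (1 + ‖v‖ ^ 2) * f2 v))
    (hf1n : (∫ v, f1 v) = n1) (hf2n : (∫ v, f2 v) = n2)
    (hf1u : (∫ v, f1 v • v) = n1 • u1) (hf2u : (∫ v, f2 v • v) = n2 • u2)
    (hf1T : (∫ v, m1 * ‖v - u1‖ ^ 2 * f1 v) = d * n1 * T1)
    (hf2T : (∫ v, m2 * ‖v - u2‖ ^ 2 * f2 v) = d * n2 * T2) :
    ν12 * n2 * (∫ v, m1 * ‖v‖ ^ 2 * (maxwellian d n1 u12 T12 m1 v - f1 v))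
      + ν21 * n1 * (∫ v, m2 * ‖v‖ ^ 2 * (maxwellian d n2 u21 T21 m2 v - f2 v)) = 0 := by
  have : NeZero d := ⟨by omega⟩
  have hu21_affine : u21 = ((m1 / m2) * ε * (1 - δ)) • u1 + (1 - (m1 / m2) * ε * (1 - δ)) • u2 := by
    rw [hu21]
    module
  rw [integral_mul_norm_sq_mul_maxwellian_sub hT12pos hm1 hf1int hf1n hf1u hf1T,
    integral_mul_norm_sq_mul_maxwellian_sub hT21pos hm2 hf2int hf2n hf2u hf2T, hu12, hu21_affine,
    norm_smul_add_one_sub_smul_sq, norm_smul_add_one_sub_smul_sq, hν12, hT12, hT21]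
  field_simp
  ring

/-- Conservation of total energy for the two-species BGK model: with the mixture
parameters `u12, u21, T12, T21` as defined (and assumed positive temperatures), the total
energy exchange `ν12 n2 ∫ m1 |v|² (M12 − f1) dv + ν21 n1 ∫ m2 |v|² (M21 − f2) dv`
vanishes. -/
theorem bgk_mixture_total_energy_conservation
    (d : ℕ) (hd : 1 ≤ d)
    (m1 m2 : ℝ) (hm1 : 0 < m1) (hm2 : 0 < m2)
    (n1 n2 : ℝ) (hn1 : 0 < n1) (hn2 : 0 < n2)
    (u1 u2 : EuclideanSpace ℝ (Fin d)) (T1 T2 : ℝ) (hT1 : 0 < T1) (hT2 : 0 < T2)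
    (ε : ℝ) (hε0 : 0 < ε) (hε1 : ε ≤ 1)
    (ν21 : ℝ) (hν21 : 0 < ν21) (ν12 : ℝ) (hν12 : ν12 = ε * ν21)
    (δ α γ : ℝ)
    (u12 : EuclideanSpace ℝ (Fin d)) (hu12 : u12 = δ • u1 + (1 - δ) • u2)
    (u21 : EuclideanSpace ℝ (Fin d))
    (hu21 : u21 = u2 - ((m1 / m2) * ε * (1 - δ)) • (u2 - u1))
    (T12 : ℝ) (hT12 : T12 = α * T1 + (1 - α) * T2 + γ * ‖u1 - u2‖ ^ 2)
    (T21 : ℝ)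
    (hT21 : T21 = ((1 / d) * ε * m1 * (1 - δ) * ((m1 / m2) * ε * (δ - 1) + δ + 1) - ε * γ)
        * ‖u1 - u2‖ ^ 2 + ε * (1 - α) * T1 + (1 - ε * (1 - α)) * T2)
    (hT12pos : 0 < T12) (hT21pos : 0 < T21)
    (f1 f2 : EuclideanSpace ℝ (Fin d) → ℝ)
    (hf1pos : ∀ v, 0 ≤ f1 v) (hf2pos : ∀ v, 0 ≤ f2 v)
    (hf1int : Integrable (fun v => (1 + ‖v‖ ^ 2) * f1 v))
    (hf2int : Integrable (fun v => (1 + ‖v‖ ^ 2) * f2 v))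
    (hf1n : (∫ v, f1 v) = n1) (hf2n : (∫ v, f2 v) = n2)
    (hf1u : (∫ v, f1 v • v) = n1 • u1) (hf2u : (∫ v, f2 v • v) = n2 • u2)
    (hf1T : (∫ v, m1 * ‖v - u1‖ ^ 2 * f1 v) = d * n1 * T1)
    (hf2T : (∫ v, m2 * ‖v - u2‖ ^ 2 * f2 v) = d * n2 * T2) :
    ν12 * n2 * (∫ v, m1 * ‖v‖ ^ 2 * (maxwellian d n1 u12 T12 m1 v - f1 v))
      + ν21 * n1 * (∫ v, m2 * ‖v‖ ^ 2 * (maxwellian d n2 u21 T21 m2 v - f2 v)) = 0 :=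
  bgk_mixture_total_energy_conservation_general d hd m1 m2 hm1 hm2 n1 n2 u1 u2 T1 T2 ε ν21 ν12 hν12
    δ α γ u12 hu12 u21 hu21 T12 hT12 T21 hT21 hT12pos hT21pos f1 f2 hf1int hf2int hf1n hf2n hf1u
    hf2u hf1T hf2T
end

section
/- (Positivity of the mixture temperatures.) Let d ≥ 1, m1, m2 > 0, 0 < ε ≤ 1, T1, T2 > 0, u1, u2 ∈ ℝ^d, and let δ, α, γ satisfy the parameter constraints ((m1/m2)ε − 1)/(1 + (m1/m2)ε) ≤ δ ≤ 1, 0 ≤ α ≤ 1, 0 ≤ γ ≤ (m1/d)(1−δ)[(1 + (m1/m2)ε) δ + 1 − (m1/m2)ε]. Then both mixture temperatures are positive: T12 = α T1 + (1−α) T2 + γ |u1 − u2|² > 0 and T21 = [ (1/d) ε m1 (1−δ)( (m1/m2) ε (δ−1) + δ + 1 ) − ε γ ] |u1 − u2|² + ε (1−α) T1 + (1 − ε(1−α)) T2 > 0. -/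
open Real

/-! The weight `ε (1 - α)` lies in `[0, 1]`, so both temperatures are a convex combination of
`T1` and `T2` plus a multiple of `|u1 - u2|²`. For `T12` that multiple is `γ ≥ 0`; for `T21` it
is `ε` times the gap in the upper constraint on `γ`, hence also nonnegative. -/

theorem convex_combination_pos {θ a b : ℝ} (hθ0 : 0 ≤ θ) (hθ1 : θ ≤ 1) (ha : 0 < a)
    (hb : 0 < b) : 0 < θ * a + (1 - θ) * b :=
  convex_Ioi (0 : ℝ) ha hb hθ0 (sub_nonneg.2 hθ1) (add_sub_cancel θ 1)

theorem mixture_coeff_eq (d : ℕ) (m1 m2 ε δ γ : ℝ) :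
    (1 / d) * ε * m1 * (1 - δ) * ((m1 / m2) * ε * (δ - 1) + δ + 1) - ε * γ
      = ε * ((m1 / d) * (1 - δ) * ((1 + (m1 / m2) * ε) * δ + 1 - (m1 / m2) * ε) - γ) := by
  ring

theorem bgk_mixture_temperatures_positive_general
    (d : ℕ)
    (m1 m2 : ℝ)
    (ε : ℝ) (hε0 : 0 < ε) (hε1 : ε ≤ 1)
    (T1 T2 : ℝ) (hT1 : 0 < T1) (hT2 : 0 < T2)
    (u1 u2 : EuclideanSpace ℝ (Fin d))
    (δ α γ : ℝ)
    (hα0 : 0 ≤ α) (hα1 : α ≤ 1)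
    (hγ0 : 0 ≤ γ)
    (hγhigh : γ ≤ (m1 / d) * (1 - δ) * ((1 + (m1 / m2) * ε) * δ + 1 - (m1 / m2) * ε)) :
    0 < α * T1 + (1 - α) * T2 + γ * ‖u1 - u2‖ ^ 2 ∧
    0 < ((1 / d) * ε * m1 * (1 - δ) * ((m1 / m2) * ε * (δ - 1) + δ + 1) - ε * γ)
          * ‖u1 - u2‖ ^ 2 + ε * (1 - α) * T1 + (1 - ε * (1 - α)) * T2 := by
  have hs : 0 ≤ ‖u1 - u2‖ ^ 2 := sq_nonneg _
  have hw0 : 0 ≤ ε * (1 - α) := mul_nonneg hε0.le (sub_nonneg.2 hα1)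
  have hw1 : ε * (1 - α) ≤ 1 :=
    mul_le_one₀ hε1 (sub_nonneg.2 hα1) (by linarith)
  refine ⟨add_pos_of_pos_of_nonneg (convex_combination_pos hα0 hα1 hT1 hT2)
    (mul_nonneg hγ0 hs), ?_⟩
  rw [mixture_coeff_eq, add_assoc]
  exact add_pos_of_nonneg_of_pos (mul_nonneg (mul_nonneg hε0.le (sub_nonneg.2 hγhigh)) hs)
    (convex_combination_pos hw0 hw1 hT1 hT2)

/-- Positivity of the mixture temperatures: under the parameter constraints on `δ`, `α`, `γ`
both mixture temperatures `T12` and `T21` are positive. -/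
theorem bgk_mixture_temperatures_positive
    (d : ℕ) (hd : 1 ≤ d)
    (m1 m2 : ℝ) (hm1 : 0 < m1) (hm2 : 0 < m2)
    (ε : ℝ) (hε0 : 0 < ε) (hε1 : ε ≤ 1)
    (T1 T2 : ℝ) (hT1 : 0 < T1) (hT2 : 0 < T2)
    (u1 u2 : EuclideanSpace ℝ (Fin d))
    (δ α γ : ℝ)
    (hδlow : ((m1 / m2) * ε - 1) / (1 + (m1 / m2) * ε) ≤ δ) (hδhigh : δ ≤ 1)
    (hα0 : 0 ≤ α) (hα1 : α ≤ 1)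
    (hγ0 : 0 ≤ γ)
    (hγhigh : γ ≤ (m1 / d) * (1 - δ) * ((1 + (m1 / m2) * ε) * δ + 1 - (m1 / m2) * ε)) :
    0 < α * T1 + (1 - α) * T2 + γ * ‖u1 - u2‖ ^ 2 ∧
    0 < ((1 / d) * ε * m1 * (1 - δ) * ((m1 / m2) * ε * (δ - 1) + δ + 1) - ε * γ)
          * ‖u1 - u2‖ ^ 2 + ε * (1 - α) * T1 + (1 - ε * (1 - α)) * T2 :=
  bgk_mixture_temperatures_positive_general d m1 m2 ε hε0 hε1 T1 T2 hT1 hT2 u1 u2 δ α γ hα0 hα1 hγ0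
    hγhigh
end

section
/- (Exponential decay of the velocity difference.) Let d ≥ 1, and let n1, n2, ν12 > 0, m1, m2 > 0, δ < 1 be constants. Suppose u1, u2 : [0,∞) → ℝ^d are differentiable and satisfy the macroscopic equations of the space-homogeneous two-species BGK model: u1'(t) = ν12 n2 (1−δ)(u2(t) − u1(t)) and u2'(t) = −ν12 n1 (m1/m2)(1−δ)(u2(t) − u1(t)) for all t ≥ 0. Then for all t ≥ 0: |u1(t) − u2(t)|² = e^{−2 ν12 (1−δ)(n2 + (m1/m2) n1) t} |u1(0) − u2(0)|². -/
/-! The difference `u1 - u2` solves the linear ODE `w' = -c • w` with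
`c = ν12 (1 - δ) (n2 + (m1 / m2) n1)`, so `e^{ct} • w t` has zero derivative and
`w t = e^{-ct} • w 0`; taking squared norms gives the claim. -/

open Real

theorem eq_exp_mul_smul_of_hasDerivAt_smul {E : Type*} [NormedAddCommGroup E] [NormedSpace ℝ E]
    {w : ℝ → E} {c : ℝ} (hw : ∀ s, 0 ≤ s → HasDerivAt w (c • w s) s) {t : ℝ} (ht : 0 ≤ t) :
    w t = exp (c * t) • w 0 := by
  set g : ℝ → E := fun s => exp (-c * s) • w s
  have hg : ∀ s, 0 ≤ s → HasDerivAt g 0 s := by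
    intro s hs
    have he : HasDerivAt (fun s => exp (-c * s)) (exp (-c * s) * -c) s := by
      simpa using ((hasDerivAt_id s).const_mul (-c)).exp
    refine (he.smul (hw s hs)).congr_deriv ?_
    module
  have hg_cont : ContinuousOn g (Set.Icc 0 t) := fun s hs =>
    (hg s hs.1).continuousAt.continuousWithinAt
  have hconst : g t = g 0 := constant_of_has_deriv_right_zero hg_cont
    (fun s hs => (hg s hs.1).hasDerivWithinAt) t (Set.right_mem_Icc.mpr ht)
  calc w t = exp (c * t) • g t := by
        rw [smul_smul, ← exp_add, neg_mul, add_neg_cancel, exp_zero, one_smul]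
    _ = exp (c * t) • w 0 := by rw [hconst]; simp [g]

theorem bgk_mixture_velocity_decay_general
    (d : ℕ)
    (n1 n2 ν12 m1 m2 δ : ℝ)
    (u1 u2 : ℝ → EuclideanSpace ℝ (Fin d))
    (hu1 : ∀ t : ℝ, 0 ≤ t →
      HasDerivAt u1 ((ν12 * n2 * (1 - δ)) • (u2 t - u1 t)) t)
    (hu2 : ∀ t : ℝ, 0 ≤ t →
      HasDerivAt u2 (-((ν12 * n1 * (m1 / m2) * (1 - δ))) • (u2 t - u1 t)) t) :
    ∀ t : ℝ, 0 ≤ t →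
      ‖u1 t - u2 t‖ ^ 2
        = Real.exp (-2 * ν12 * (1 - δ) * (n2 + (m1 / m2) * n1) * t)
            * ‖u1 0 - u2 0‖ ^ 2 := by
  intro t ht
  set c := -(ν12 * (1 - δ) * (n2 + (m1 / m2) * n1))
  have hdiff : ∀ s, 0 ≤ s → HasDerivAt (fun s => u1 s - u2 s) (c • (u1 s - u2 s)) s :=
    fun s hs => ((hu1 s hs).sub (hu2 s hs)).congr_deriv (by module)
  rw [eq_exp_mul_smul_of_hasDerivAt_smul hdiff ht, norm_smul, mul_pow,
    norm_of_nonneg (exp_pos _).le, ← exp_nat_mul]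
  congr 2
  push_cast
  ring

/-- Exponential decay of the velocity difference in the space-homogeneous two-species
BGK model: if `u1' = ν12 n2 (1−δ)(u2 − u1)` and `u2' = −ν12 n1 (m1/m2)(1−δ)(u2 − u1)`
for all `t ≥ 0`, then
`|u1(t) − u2(t)|² = e^{−2 ν12 (1−δ)(n2 + (m1/m2) n1) t} |u1(0) − u2(0)|²`. -/
theorem bgk_mixture_velocity_decay
    (d : ℕ) (hd : 1 ≤ d)
    (n1 n2 ν12 m1 m2 δ : ℝ)
    (hn1 : 0 < n1) (hn2 : 0 < n2) (hν12 : 0 < ν12) (hm1 : 0 < m1) (hm2 : 0 < m2)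
    (hδ : δ < 1)
    (u1 u2 : ℝ → EuclideanSpace ℝ (Fin d))
    (hu1diff : Differentiable ℝ u1) (hu2diff : Differentiable ℝ u2)
    (hu1 : ∀ t : ℝ, 0 ≤ t →
      HasDerivAt u1 ((ν12 * n2 * (1 - δ)) • (u2 t - u1 t)) t)
    (hu2 : ∀ t : ℝ, 0 ≤ t →
      HasDerivAt u2 (-((ν12 * n1 * (m1 / m2) * (1 - δ))) • (u2 t - u1 t)) t) :
    ∀ t : ℝ, 0 ≤ t →
      ‖u1 t - u2 t‖ ^ 2
        = Real.exp (-2 * ν12 * (1 - δ) * (n2 + (m1 / m2) * n1) * t)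
            * ‖u1 0 - u2 0‖ ^ 2 :=
  bgk_mixture_velocity_decay_general d n1 n2 ν12 m1 m2 δ u1 u2 hu1 hu2
end

section
/- (Exponential decay of the temperature difference.) Let d ≥ 1 and let n1, n2, ν12 > 0, m1, m2 > 0, δ < 1, α, γ be constants. Define C1 = (1−α) ν12 (n2 + n1), C2 = ν12 ( n2 ((1−δ)² + γ/m1) − n1 (1 − δ² − γ/m1) ), C3 = 2 ν12 (1−δ)(n2 + (m1/m2) n1), and assume C1 ≠ C3. Suppose u1, u2 : [0,∞) → ℝ^d are differentiable with u1'(t) = ν12 n2 (1−δ)(u2(t) − u1(t)) and u2'(t) = −ν12 n1 (m1/m2)(1−δ)(u2(t) − u1(t)), and T1, T2 : [0,∞) → ℝ are differentiable with (T1 − T2)'(t) = −C1 (T1(t) − T2(t)) + C2 |u1(t) − u2(t)|² for all t ≥ 0. Then for all t ≥ 0: T1(t) − T2(t) = e^{−C1 t} [ T1(0) − T2(0) + (C2/(C1 − C3)) ( e^{(C1 − C3) t} − 1 ) |u1(0) − u2(0)|² ]. -/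
/-!
The velocity difference `w = u₁ - u₂` solves the linear equation `w' = -(C₃/2) w`, so
`‖w(t)‖² = e^{-C₃ t} ‖w(0)‖²`. The temperature difference therefore solves the scalar equation
`y' = -C₁ y + C₂ ‖w(0)‖² e^{-C₃ t}`, whose solution follows from the integrating factor `e^{C₁ t}`:
`e^{C₁ t} y(t) - C₂ ‖w(0)‖² e^{(C₁ - C₃) t} / (C₁ - C₃)` has zero derivative.
-/

open Real

section ForwardODE

variable {E : Type*} [NormedAddCommGroup E] [NormedSpace ℝ E]

theorem eq_of_hasDerivAt_zero_of_nonneg {f : ℝ → E}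
    (hf : ∀ t, 0 ≤ t → HasDerivAt f 0 t) {t : ℝ} (ht : 0 ≤ t) : f t = f 0 :=
  constant_of_has_deriv_right_zero
    (fun x hx => (hf x hx.1).continuousAt.continuousWithinAt)
    (fun x hx => (hf x hx.1).hasDerivWithinAt) t ⟨ht, le_rfl⟩

theorem hasDerivAt_exp_const_mul (c t : ℝ) :
    HasDerivAt (fun s => exp (c * s)) (c * exp (c * t)) t := by
  simpa [mul_comm] using ((hasDerivAt_id t).const_mul c).exp

theorem eq_exp_smul_of_hasDerivAt_eq_smul {f : ℝ → E} {c : ℝ}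
    (hf : ∀ t, 0 ≤ t → HasDerivAt f (c • f t) t) {t : ℝ} (ht : 0 ≤ t) :
    f t = exp (c * t) • f 0 := by
  have hconst : ∀ s, 0 ≤ s → HasDerivAt (fun s => exp (-c * s) • f s) 0 s := by
    intro s hs
    refine ((hasDerivAt_exp_const_mul (-c) s).smul (hf s hs)).congr_deriv ?_
    rw [smul_smul, ← add_smul]
    ring_nf
    rw [zero_smul]
  have h := eq_of_hasDerivAt_zero_of_nonneg hconst ht
  simp only [mul_zero, exp_zero, one_smul] at h
  rw [← h, smul_smul, ← exp_add]
  ring_nf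
  rw [exp_zero, one_smul]

theorem norm_sq_eq_exp_mul_of_hasDerivAt_eq_smul {f : ℝ → E} {c : ℝ}
    (hf : ∀ t, 0 ≤ t → HasDerivAt f (c • f t) t) {t : ℝ} (ht : 0 ≤ t) :
    ‖f t‖ ^ 2 = exp (2 * c * t) * ‖f 0‖ ^ 2 := by
  rw [eq_exp_smul_of_hasDerivAt_eq_smul hf ht, norm_smul, norm_of_nonneg (exp_pos _).le,
    mul_pow, ← exp_nat_mul]
  ring_nf

end ForwardODE

theorem eq_of_hasDerivAt_neg_mul_add_mul_exp {y : ℝ → ℝ} {a b c : ℝ} (hac : a ≠ c)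
    (hy : ∀ t, 0 ≤ t → HasDerivAt y (-a * y t + b * exp (-c * t)) t) {t : ℝ} (ht : 0 ≤ t) :
    y t = exp (-a * t) * (y 0 + b / (a - c) * (exp ((a - c) * t) - 1)) := by
  have hconst : ∀ s, 0 ≤ s → HasDerivAt
      (fun s => exp (a * s) * y s - b / (a - c) * exp ((a - c) * s)) 0 s := by
    intro s hs
    refine (((hasDerivAt_exp_const_mul a s).mul (hy s hs)).sub
      ((hasDerivAt_exp_const_mul (a - c) s).const_mul (b / (a - c)))).congr_deriv ?_
    have hexp : exp (a * s) * exp (-c * s) = exp ((a - c) * s) := by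
      rw [← exp_add]; ring_nf
    rw [← hexp]
    field_simp
    ring
  have h := eq_of_hasDerivAt_zero_of_nonneg hconst ht
  simp only [mul_zero, exp_zero, one_mul, mul_one] at h
  have hexp : exp (-a * t) * exp (a * t) = 1 := by
    rw [← exp_add]; ring_nf; exact exp_zero
  linear_combination exp (-a * t) * h - y t * hexp

theorem bgk_mixture_temperature_decay_general
    (d : ℕ)
    (n1 n2 ν12 m1 m2 δ : ℝ)
    (C1 C2 C3 : ℝ)
    (hC3 : C3 = 2 * ν12 * (1 - δ) * (n2 + (m1 / m2) * n1))
    (hC : C1 ≠ C3)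
    (u1 u2 : ℝ → EuclideanSpace ℝ (Fin d))
    (hu1 : ∀ t : ℝ, 0 ≤ t →
      HasDerivAt u1 ((ν12 * n2 * (1 - δ)) • (u2 t - u1 t)) t)
    (hu2 : ∀ t : ℝ, 0 ≤ t →
      HasDerivAt u2 (-((ν12 * n1 * (m1 / m2) * (1 - δ))) • (u2 t - u1 t)) t)
    (T1 T2 : ℝ → ℝ)
    (hT : ∀ t : ℝ, 0 ≤ t →
      HasDerivAt (fun s => T1 s - T2 s)
        (-C1 * (T1 t - T2 t) + C2 * ‖u1 t - u2 t‖ ^ 2) t) :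
    ∀ t : ℝ, 0 ≤ t →
      T1 t - T2 t
        = Real.exp (-C1 * t) * (T1 0 - T2 0
            + C2 / (C1 - C3) * (Real.exp ((C1 - C3) * t) - 1) * ‖u1 0 - u2 0‖ ^ 2) := by
  have hw : ∀ t, 0 ≤ t →
      HasDerivAt (fun s => u1 s - u2 s) ((-(C3 / 2)) • (u1 t - u2 t)) t := by
    intro t ht
    refine ((hu1 t ht).sub (hu2 t ht)).congr_deriv ?_
    rw [hC3, ← sub_smul, ← neg_sub (u1 t), smul_neg, ← neg_smul]
    congr 1
    ring
  have hT' : ∀ t, 0 ≤ t → HasDerivAt (fun s => T1 s - T2 s)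
      (-C1 * (T1 t - T2 t) + C2 * ‖u1 0 - u2 0‖ ^ 2 * exp (-C3 * t)) t := by
    intro t ht
    convert hT t ht using 2
    rw [norm_sq_eq_exp_mul_of_hasDerivAt_eq_smul hw ht]
    ring_nf
  intro t ht
  rw [eq_of_hasDerivAt_neg_mul_add_mul_exp hC hT' ht]
  ring

/-- Exponential decay of the temperature difference in the space-homogeneous two-species
BGK model: with `C1 = (1−α) ν12 (n2 + n1)`,
`C2 = ν12 (n2 ((1−δ)² + γ/m1) − n1 (1 − δ² − γ/m1))`,
`C3 = 2 ν12 (1−δ)(n2 + (m1/m2) n1)`, `C1 ≠ C3`, if the velocities satisfy the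
macroscopic ODEs and `(T1 − T2)' = −C1 (T1 − T2) + C2 |u1 − u2|²`, then
`T1(t) − T2(t) = e^{−C1 t} [T1(0) − T2(0) + (C2/(C1−C3))(e^{(C1−C3)t} − 1)|u1(0) − u2(0)|²]`. -/
theorem bgk_mixture_temperature_decay
    (d : ℕ) (hd : 1 ≤ d)
    (n1 n2 ν12 m1 m2 δ α γ : ℝ)
    (hn1 : 0 < n1) (hn2 : 0 < n2) (hν12 : 0 < ν12) (hm1 : 0 < m1) (hm2 : 0 < m2)
    (hδ : δ < 1)
    (C1 C2 C3 : ℝ)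
    (hC1 : C1 = (1 - α) * ν12 * (n2 + n1))
    (hC2 : C2 = ν12 * (n2 * ((1 - δ) ^ 2 + γ / m1) - n1 * (1 - δ ^ 2 - γ / m1)))
    (hC3 : C3 = 2 * ν12 * (1 - δ) * (n2 + (m1 / m2) * n1))
    (hC : C1 ≠ C3)
    (u1 u2 : ℝ → EuclideanSpace ℝ (Fin d))
    (hu1diff : Differentiable ℝ u1) (hu2diff : Differentiable ℝ u2)
    (hu1 : ∀ t : ℝ, 0 ≤ t →
      HasDerivAt u1 ((ν12 * n2 * (1 - δ)) • (u2 t - u1 t)) t)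
    (hu2 : ∀ t : ℝ, 0 ≤ t →
      HasDerivAt u2 (-((ν12 * n1 * (m1 / m2) * (1 - δ))) • (u2 t - u1 t)) t)
    (T1 T2 : ℝ → ℝ)
    (hT1diff : Differentiable ℝ T1) (hT2diff : Differentiable ℝ T2)
    (hT : ∀ t : ℝ, 0 ≤ t →
      HasDerivAt (fun s => T1 s - T2 s)
        (-C1 * (T1 t - T2 t) + C2 * ‖u1 t - u2 t‖ ^ 2) t) :
    ∀ t : ℝ, 0 ≤ t →
      T1 t - T2 t
        = Real.exp (-C1 * t) * (T1 0 - T2 0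
            + C2 / (C1 - C3) * (Real.exp ((C1 - C3) * t) - 1) * ‖u1 0 - u2 0‖ ^ 2) :=
  bgk_mixture_temperature_decay_general d n1 n2 ν12 m1 m2 δ C1 C2 C3 hC3 hC u1 u2 hu1 hu2 T1 T2 hT
end
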